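/- For all natural numbers k ≥ 0, m ≥ 0, m₂ ≥ 0 and every real number τ with 0 < τ ≤ 1, the iterated integral ∫_0^τ ( ∫_τ^1 [ (τ/t)·(1 - (1-t)^k)·(1 - (1-β)^m) + (1-t)^k·(1 - (1-β)^{m₂}) ] dt ) dβ equals -τ·( Σ_{i=1}^{k} C(k,i)·(-1)^i·(1 - τ^i)/i )·( τ - (1 - (1-τ)^{m+1})/(m+1) ) + ((1-τ)^{k+1}/(k+1))·( τ - (1 - (1-τ)^{m₂+1})/(m₂+1) ). -/

import Mathlib

/-!
The integrand is a sum of two products of a function of `t` and a function of `β`, so the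
iterated integral splits into products of one-variable integrals. Of these only
`∫ (1 - (1 - t) ^ k) / t` is not a direct power integral: the binomial expansion of
`(1 - t) ^ k` has constant term `1`, so `(1 - (1 - t) ^ k) / t` is a polynomial.
-/

open Finset intervalIntegral
open MeasureTheory (volume)

lemma one_sub_one_sub_pow (k : ℕ) (t : ℝ) :
    1 - (1 - t) ^ k = -∑ i ∈ Icc 1 k, (k.choose i : ℝ) * (-1) ^ i * t ^ i := by
  rw [sub_eq_neg_add 1 t, add_pow, range_eq_Ico,
    sum_eq_sum_Ico_succ_bot (by positivity : 0 < k + 1), zero_add, Ico_add_one_right_eq_Icc]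
  simp only [pow_zero, one_pow, mul_one, Nat.choose_zero_right, Nat.cast_one,
    sub_add_cancel_left]
  exact congrArg _ (sum_congr rfl fun i _ => by ring)

lemma one_sub_one_sub_pow_div (k : ℕ) {t : ℝ} (ht : t ≠ 0) :
    (1 - (1 - t) ^ k) / t = -∑ i ∈ Icc 1 k, (k.choose i : ℝ) * (-1) ^ i * t ^ (i - 1) := by
  rw [one_sub_one_sub_pow, neg_div, sum_div]
  congr! 2 with i hi
  obtain ⟨j, rfl⟩ := Nat.exists_eq_add_of_le' (mem_Icc.1 hi).1
  rw [add_tsub_cancel_right]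
  field_simp
  ring

lemma integral_one_sub_one_sub_pow_div (k : ℕ) {a b : ℝ} (h0 : (0 : ℝ) ∉ Set.uIcc a b) :
    ∫ t in a..b, (1 - (1 - t) ^ k) / t =
      -∑ i ∈ Icc 1 k, (k.choose i : ℝ) * (-1) ^ i * (b ^ i - a ^ i) / i := by
  have hEq : Set.EqOn (fun t : ℝ => (1 - (1 - t) ^ k) / t)
      (fun t => -∑ i ∈ Icc 1 k, (k.choose i : ℝ) * (-1) ^ i * t ^ (i - 1)) (Set.uIcc a b) :=
    fun t ht => one_sub_one_sub_pow_div k (ne_of_mem_of_not_mem ht h0)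
  rw [integral_congr hEq, integral_neg,
    integral_finsetSum fun i _ => (by fun_prop : Continuous _).intervalIntegrable _ _]
  congr! 2 with i hi
  obtain ⟨j, rfl⟩ := Nat.exists_eq_add_of_le' (mem_Icc.1 hi).1
  rw [integral_const_mul, integral_pow, add_tsub_cancel_right]
  push_cast
  ring

lemma integral_one_sub_pow (k : ℕ) (a b : ℝ) :
    ∫ t in a..b, (1 - t) ^ k = ((1 - a) ^ (k + 1) - (1 - b) ^ (k + 1)) / (k + 1) := by
  simp [integral_comp_sub_left fun u => u ^ k, integral_pow]

lemma integral_one_sub_one_sub_pow (m : ℕ) (b : ℝ) :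
    ∫ β in (0 : ℝ)..b, (1 - (1 - β) ^ m) = b - (1 - (1 - b) ^ (m + 1)) / (m + 1) := by
  rw [integral_sub intervalIntegrable_const ((by fun_prop : Continuous _).intervalIntegrable _ _),
    integral_one_sub_pow]
  simp

lemma integral_integral_mul_add_mul {f g u v : ℝ → ℝ} {a b c d : ℝ}
    (hf : IntervalIntegrable f volume c d) (hg : IntervalIntegrable g volume a b)
    (hu : IntervalIntegrable u volume c d) (hv : IntervalIntegrable v volume a b) :
    ∫ β in a..b, ∫ t in c..d, (f t * g β + u t * v β) =
      (∫ t in c..d, f t) * (∫ β in a..b, g β) +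
        (∫ t in c..d, u t) * (∫ β in a..b, v β) := by
  simp_rw [integral_add (hf.mul_const _) (hu.mul_const _), integral_mul_const]
  rw [integral_add (hg.const_mul _) (hv.const_mul _), integral_const_mul, integral_const_mul]

theorem stmt_11_general (k m m₂ : ℕ) (τ : ℝ) (hτ : 0 < τ) :
    ∫ β in (0:ℝ)..τ, (∫ t in τ..1,
        ((τ / t) * (1 - (1 - t) ^ k) * (1 - (1 - β) ^ m)
          + (1 - t) ^ k * (1 - (1 - β) ^ m₂))) =
      -τ * (∑ i ∈ Finset.Icc 1 k,
            (k.choose i : ℝ) * (-1) ^ i * (1 - τ ^ i) / i) *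
          (τ - (1 - (1 - τ) ^ (m + 1)) / (m + 1))
        + ((1 - τ) ^ (k + 1) / (k + 1)) *
          (τ - (1 - (1 - τ) ^ (m₂ + 1)) / (m₂ + 1)) := by
  have h0 : (0 : ℝ) ∉ Set.uIcc τ 1 := Set.notMem_uIcc_of_lt hτ one_pos
  have hf : IntervalIntegrable (fun t => τ / t * (1 - (1 - t) ^ k)) volume τ 1 :=
    ((continuousOn_const.div continuousOn_id fun t ht => ne_of_mem_of_not_mem ht h0).mul
      (by fun_prop)).intervalIntegrable
  have hf_int : ∫ t in τ..1, τ / t * (1 - (1 - t) ^ k) =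
      -τ * ∑ i ∈ Icc 1 k, (k.choose i : ℝ) * (-1) ^ i * (1 - τ ^ i) / i := by
    simp_rw [div_mul_eq_mul_div, mul_div_assoc]
    rw [integral_const_mul, integral_one_sub_one_sub_pow_div k h0]
    simp [mul_div_assoc]
  have hcont : ∀ n : ℕ, Continuous fun β : ℝ => 1 - (1 - β) ^ n := fun n => by fun_prop
  rw [integral_integral_mul_add_mul hf ((hcont m).intervalIntegrable _ _)
    ((by fun_prop : Continuous _).intervalIntegrable _ _) ((hcont m₂).intervalIntegrable _ _),
    hf_int, integral_one_sub_pow, integral_one_sub_one_sub_pow, integral_one_sub_one_sub_pow]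
  simp

theorem stmt_11 (k m m₂ : ℕ) (τ : ℝ) (hτ : 0 < τ) (hτ1 : τ ≤ 1) :
    ∫ β in (0:ℝ)..τ, (∫ t in τ..1,
        ((τ / t) * (1 - (1 - t) ^ k) * (1 - (1 - β) ^ m)
          + (1 - t) ^ k * (1 - (1 - β) ^ m₂))) =
      -τ * (∑ i ∈ Finset.Icc 1 k,
            (k.choose i : ℝ) * (-1) ^ i * (1 - τ ^ i) / i) *
          (τ - (1 - (1 - τ) ^ (m + 1)) / (m + 1))
        + ((1 - τ) ^ (k + 1) / (k + 1)) *
          (τ - (1 - (1 - τ) ^ (m₂ + 1)) / (m₂ + 1)) :=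
  stmt_11_general k m m₂ τ hτ
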